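/- arXiv:0804.3779 — 2 statements merged into one kernel-verified Lean document; each statement's English description precedes it below -/
import Mathlib

section
/- Suppose 0 < ε_r < 1 and 0 < ε_a/ε_r + ε_a ≤ 1/2, and let K be hypergeometric with parameters N, M, n where p = M/N satisfies ε_a/ε_r < p < 1. Then Pr{K/n ≥ (1+ε_r)·p} ≤ exp(n · g(ε_a, ε_a/ε_r)), where g(ε, p) = (p+ε)·ln(p/(p+ε)) + (1−p−ε)·ln((1−p)/(1−p−ε)). -/
open scoped Classical

noncomputable def g (ε p : ℝ) : ℝ :=
  (p + ε) * Real.log (p / (p + ε)) + (1 - p - ε) * Real.log ((1 - p) / (1 - p - ε))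

/-- Probability that a hypergeometric random variable `K` (number of marked units among
`n` units drawn without replacement from `N` units of which `M` are marked) satisfies `P K`. -/
noncomputable def prHyp (N M n : ℕ) (P : ℕ → Prop) : ℝ :=
  ∑ i ∈ Finset.range (n + 1),
    if P i then (M.choose i * (N - M).choose (n - i) : ℝ) / (N.choose n) else 0

noncomputable def F (c x : ℝ) : ℝ :=
  c * x * Real.log c + (1 - c * x) * (Real.log (1 - c * x) - Real.log (1 - x))

lemma hasDerivAt_F {c x : ℝ} (hc : 1 < c) (hx : 0 < x) (hcx : c * x < 1) :
    HasDerivAt (fun y => F c y)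
      (c * 1 * Real.log c + ((-c) * (Real.log (1 - c * x) - Real.log (1 - x))
        + (1 - c * x) * ((1 - c * x)⁻¹ * (-c) - (1 - x)⁻¹ * (-1)))) x := by
  have h1 : 0 < 1 - c * x := by linarith
  have h2 : 0 < 1 - x := by nlinarith
  have d1 : HasDerivAt (fun y : ℝ => 1 - c * y) (-c) x := by
    simpa using ((hasDerivAt_id x).const_mul c).const_sub (1 : ℝ)
  have d2 : HasDerivAt (fun y : ℝ => 1 - y) (-1) x := by
    simpa using (hasDerivAt_id x).const_sub (1 : ℝ)
  have dl1 : HasDerivAt (fun y : ℝ => Real.log (1 - c * y)) ((1 - c * x)⁻¹ * (-c)) x :=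
    by have := (Real.hasDerivAt_log h1.ne').comp x d1; exact this
  have dl2 : HasDerivAt (fun y : ℝ => Real.log (1 - y)) ((1 - x)⁻¹ * (-1)) x :=
    (Real.hasDerivAt_log h2.ne').comp x d2
  have dA : HasDerivAt (fun y : ℝ => c * y * Real.log c) (c * 1 * Real.log c) x :=
    ((hasDerivAt_id x).const_mul c).mul_const (Real.log c)
  have dB := d1.mul (dl1.sub dl2)
  exact dA.add dB

lemma F_mono {c q p : ℝ} (hc : 1 < c) (hq : 0 < q) (hqp : q ≤ p) (hp : c * p < 1) :
    F c q ≤ F c p := by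
  have hc0 : (0 : ℝ) < c := lt_trans one_pos hc
  have key : ∀ x ∈ Set.Icc q p, HasDerivAt (fun y => F c y)
      (c * 1 * Real.log c + ((-c) * (Real.log (1 - c * x) - Real.log (1 - x))
        + (1 - c * x) * ((1 - c * x)⁻¹ * (-c) - (1 - x)⁻¹ * (-1)))) x := by
    intro x hx
    exact hasDerivAt_F hc (lt_of_lt_of_le hq hx.1) (lt_of_le_of_lt (by nlinarith [hx.2]) hp)
  have mono : MonotoneOn (fun y => F c y) (Set.Icc q p) := by
    apply monotoneOn_of_deriv_nonneg (convex_Icc q p)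
    · intro x hx
      exact (key x hx).continuousAt.continuousWithinAt
    · intro x hx
      exact ((key x (interior_subset hx)).differentiableAt).differentiableWithinAt
    · intro x hx
      have hx' : x ∈ Set.Icc q p := interior_subset hx
      rw [(key x hx').deriv]
      have hx0 : 0 < x := lt_of_lt_of_le hq hx'.1
      have hcx : c * x < 1 := lt_of_le_of_lt (by nlinarith [hx'.2]) hp
      have h1 : 0 < 1 - c * x := by linarith
      have h2 : 0 < 1 - x := by nlinarith
      set u : ℝ := (1 - c * x) / (1 - x) with hu
      have hu0 : 0 < u := div_pos h1 h2
      have hu1 : u ≤ 1 := (div_le_one h2).mpr (by nlinarith)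
      have hlogu : Real.log (1 - c * x) - Real.log (1 - x) = Real.log u :=
        (Real.log_div h1.ne' h2.ne').symm
      have e1 : (1 - c * x) * ((1 - c * x)⁻¹ * (-c) - (1 - x)⁻¹ * (-1)) = -c + u := by
        rw [hu]; field_simp; ring
      rw [hlogu, e1]
      have hlu : Real.log u ≤ u - 1 := Real.log_le_sub_one_of_pos hu0
      have hlc : 1 - 1 / c ≤ Real.log c := by
        have h := Real.log_le_sub_one_of_pos (inv_pos.mpr hc0)
        rw [Real.log_inv] at h
        have : (c:ℝ)⁻¹ = 1 / c := by ring
        linarith [this ▸ h]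
      have f1 : c * Real.log u ≤ c * (u - 1) := mul_le_mul_of_nonneg_left hlu hc0.le
      have f2 : c * (1 - 1 / c) ≤ c * Real.log c := mul_le_mul_of_nonneg_left hlc hc0.le
      have f2' : c * (1 - 1 / c) = c - 1 := by field_simp
      have f3 : 0 ≤ (c - 1) * (1 - u) := mul_nonneg (by linarith) (by linarith)
      nlinarith [f1, f2, f2', f3]
  exact mono (Set.left_mem_Icc.mpr hqp) (Set.right_mem_Icc.mpr hqp) hqp

lemma g_eq_negF {εr x : ℝ} (hεr : 0 < εr) (hx : 0 < x) (hcx : (1 + εr) * x < 1) :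
    g (εr * x) x = -F (1 + εr) x := by
  have hc0 : (0 : ℝ) < 1 + εr := by linarith
  have h1 : 0 < 1 - (1 + εr) * x := by linarith
  have h2 : 0 < 1 - x := by nlinarith
  unfold g F
  have e1 : x + εr * x = (1 + εr) * x := by ring
  have e2 : 1 - x - εr * x = 1 - (1 + εr) * x := by ring
  have e3 : x / ((1 + εr) * x) = (1 + εr)⁻¹ := by
    field_simp
  rw [e1, e2, e3, Real.log_inv, Real.log_div h2.ne' h1.ne']
  ring

lemma F_le_log {c q : ℝ} (hc : 1 < c) (hq : 0 < q) (hcq : c * q ≤ 1 / 2) :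
    F c q ≤ Real.log c := by
  have hc0 : (0 : ℝ) < c := lt_trans one_pos hc
  have hlc : 0 ≤ Real.log c := Real.log_nonneg hc.le
  have h1 : 0 < 1 - c * q := by linarith
  have hqcq : q ≤ c * q := by nlinarith
  have h2 : 0 < 1 - q := by linarith
  have t1 : c * q * Real.log c ≤ Real.log c := by nlinarith
  have t2 : (1 - c * q) * (Real.log (1 - c * q) - Real.log (1 - q)) ≤ 0 :=
    mul_nonpos_of_nonneg_of_nonpos h1.le
      (sub_nonpos.mpr (Real.log_le_log h1 (by linarith)))
  unfold F
  linarith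

lemma desc_le (M N : ℕ) (hM : M ≤ N) : ∀ n, M.descFactorial n * N ^ n ≤ N.descFactorial n * M ^ n
  | 0 => by simp
  | n + 1 => by
    have ih := desc_le M N hM n
    have h1 : (M - n) * N ≤ (N - n) * M := by
      rcases le_or_gt M n with h | h
      · simp [Nat.sub_eq_zero_of_le h]
      · rw [Nat.sub_mul, Nat.sub_mul, mul_comm N M]
        exact Nat.sub_le_sub_left (Nat.mul_le_mul_left n hM) (M * N)
    calc M.descFactorial (n + 1) * N ^ (n + 1)
        = ((M - n) * N) * (M.descFactorial n * N ^ n) := by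
          rw [Nat.descFactorial_succ]; ring
      _ ≤ ((N - n) * M) * (N.descFactorial n * M ^ n) := Nat.mul_le_mul h1 ih
      _ = N.descFactorial (n + 1) * M ^ (n + 1) := by
          rw [Nat.descFactorial_succ]; ring

lemma choose_div_le (M N n : ℕ) (hM : M ≤ N) (hnN : n ≤ N) (hN : 0 < N) :
    (M.choose n : ℝ) / (N.choose n) ≤ ((M : ℝ) / N) ^ n := by
  have hch : 0 < N.choose n := Nat.choose_pos hnN
  have key : M.choose n * N ^ n ≤ N.choose n * M ^ n := by
    have h := desc_le M N hM n
    rw [Nat.descFactorial_eq_factorial_mul_choose, Nat.descFactorial_eq_factorial_mul_choose,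
      mul_assoc, mul_assoc] at h
    exact Nat.le_of_mul_le_mul_left h n.factorial_pos
  have hNR : (0 : ℝ) < (N : ℝ) ^ n := pow_pos (by exact_mod_cast hN) n
  have hchR : (0 : ℝ) < (N.choose n : ℝ) := by exact_mod_cast hch
  rw [div_pow, div_le_div_iff₀ hchR hNR]
  have key' : M.choose n * N ^ n ≤ M ^ n * N.choose n := key.trans_eq (Nat.mul_comm _ _)
  exact_mod_cast key'

theorem stmt_8 (N M n : ℕ) (hn : 1 ≤ n) (hnN : n ≤ N) (hM : M ≤ N)
    (εa εr p : ℝ) (hεr0 : 0 < εr) (hεr1 : εr < 1) (hεa0 : 0 < εa)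
    (hhalf : εa / εr + εa ≤ 1 / 2)
    (hp : p = (M : ℝ) / N) (hpl : εa / εr < p) (hpu : p < 1)
    -- Hoeffding's inequality for sampling without replacement (assumed):
    (hHoeff : ∀ ε : ℝ, 0 < ε → ε < 1 - p →
      prHyp N M n (fun i => p + ε ≤ (i : ℝ) / n) ≤ Real.exp (n * g ε p)) :
    prHyp N M n (fun i => (1 + εr) * p ≤ (i : ℝ) / n) ≤
      Real.exp (n * g εa (εa / εr)) := by
  set q : ℝ := εa / εr with hqdef
  have hq0 : 0 < q := div_pos hεa0 hεr0
  have hc : (1 : ℝ) < 1 + εr := by linarith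
  have hεaq : εr * q = εa := by rw [hqdef]; field_simp
  have hcq : (1 + εr) * q ≤ 1 / 2 := by
    have e : (1 + εr) * q = q + εr * q := by ring
    rw [e, hεaq]; exact hhalf
  have hgq : g εa q = -F (1 + εr) q := by
    rw [← hεaq]; exact g_eq_negF hεr0 hq0 (by linarith)
  have hp0 : 0 < p := lt_trans hq0 hpl
  have hn0 : (0 : ℝ) < n := by exact_mod_cast hn
  rcases lt_trichotomy ((1 + εr) * p) 1 with hcase | hcase | hcase
  · -- (1+εr)p < 1 : apply Hoeffding with ε = εr p and monotonicity
    have hev : (fun i : ℕ => (1 + εr) * p ≤ (i : ℝ) / n)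
        = (fun i : ℕ => p + εr * p ≤ (i : ℝ) / n) := by
      funext i
      rw [show (1 + εr) * p = p + εr * p from by ring]
    rw [hev]
    have h1 := hHoeff (εr * p) (mul_pos hεr0 hp0) (by nlinarith)
    refine h1.trans (Real.exp_le_exp.mpr (mul_le_mul_of_nonneg_left ?_ hn0.le))
    rw [g_eq_negF hεr0 hp0 hcase, hgq]
    exact neg_le_neg (F_mono hc hq0 hpl.le hcase)
  · -- (1+εr)p = 1 : only the term i = n contributes
    have h0 : ∀ i ∈ Finset.range (n + 1), i ≠ n →
        (if (1 + εr) * p ≤ (i : ℝ) / n then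
          (M.choose i * (N - M).choose (n - i) : ℝ) / (N.choose n) else 0) = 0 := by
      intro i hi hne
      rw [if_neg]
      intro hle
      have hin : i < n := lt_of_le_of_ne (Nat.lt_succ_iff.mp (Finset.mem_range.mp hi)) hne
      have : (i : ℝ) / n < 1 := by
        rw [div_lt_one hn0]; exact_mod_cast hin
      linarith [hcase ▸ hle]
    have hpe : prHyp N M n (fun i => (1 + εr) * p ≤ (i : ℝ) / n)
        = (M.choose n : ℝ) / (N.choose n) := by
      unfold prHyp
      rw [Finset.sum_eq_single n h0 (fun hn' => absurd (Finset.self_mem_range_succ n) hn')]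
      rw [if_pos (by rw [div_self hn0.ne', hcase])]
      rw [Nat.sub_self, Nat.choose_zero_right]
      norm_num
    rw [hpe]
    have hN0 : 0 < N := lt_of_lt_of_le hn hnN
    have b1 := choose_div_le M N n hM hnN hN0
    rw [← hp] at b1
    refine b1.trans ?_
    have hppow : p ^ n = Real.exp (n * Real.log p) := by
      rw [Real.exp_nat_mul, Real.exp_log hp0]
    rw [hppow]
    refine Real.exp_le_exp.mpr (mul_le_mul_of_nonneg_left ?_ hn0.le)
    have hpeq : p = (1 + εr)⁻¹ := by
      field_simp
      linear_combination hcase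
    rw [hpeq, Real.log_inv, hgq]
    exact neg_le_neg (F_le_log hc hq0 hcq)
  · -- (1+εr)p > 1 : the event is empty
    have hpe : prHyp N M n (fun i => (1 + εr) * p ≤ (i : ℝ) / n) = 0 := by
      unfold prHyp
      apply Finset.sum_eq_zero
      intro i hi
      rw [if_neg]
      intro hle
      have hin : (i : ℝ) ≤ n := by
        exact_mod_cast Nat.lt_succ_iff.mp (Finset.mem_range.mp hi)
      have : (i : ℝ) / n ≤ 1 := by rw [div_le_one hn0]; exact hin
      linarith
    rw [hpe]
    exact (Real.exp_pos _).le
end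

section
/- Under the same inverse sampling scheme (population N, M marked, 1 ≤ r ≤ M < N, p = M/N, n the random sample size at termination), if p(1+ε) < 1 for ε ∈ (0,1), then Pr{ r/n ≥ (1+ε)·p } ≤ (1+ε)^{−r}·exp(εr/(1+ε)). -/
set_option maxHeartbeats 1000000


open scoped Classical

/-- Uniform probability over draw orders (permutations of the `N` population units)
of an event `E`. -/
noncomputable def Pr (N : ℕ) (E : Equiv.Perm (Fin N) → Prop) : ℝ :=
  ((Finset.univ.filter E).card : ℝ) / (Nat.factorial N : ℝ)

/-- Number of marked units (units with index `< M`) among the first `m` draws,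
when the units are drawn without replacement in the order given by `σ`. -/
def drawCount (N M : ℕ) (σ : Equiv.Perm (Fin N)) (m : ℕ) : ℕ :=
  (Finset.univ.filter (fun i : Fin N => (i : ℕ) < m ∧ ((σ i : ℕ) < M))).card

/-- Inverse sampling: sample size when sampling stops, i.e. the first time `r` marked
units have been found, or `N` if the whole population is examined first. -/
noncomputable def stopTime (N M r : ℕ) (σ : Equiv.Perm (Fin N)) : ℕ :=
  sInf {m | drawCount N M σ m = r ∨ m = N}

noncomputable def Hfun (z p : ℝ) : ℝ :=
  z * (Real.log (p / z) + (1 / z - 1) * Real.log ((1 - p) / (1 - z)))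

lemma Pr_mono {N : ℕ} {E E' : Equiv.Perm (Fin N) → Prop} (h : ∀ σ, E σ → E' σ) :
    Pr N E ≤ Pr N E' := by
  unfold Pr
  gcongr
  · exact h _

lemma drawCount_mono (N M : ℕ) (σ : Equiv.Perm (Fin N)) {a b : ℕ} (h : a ≤ b) :
    drawCount N M σ a ≤ drawCount N M σ b := by
  apply Finset.card_le_card
  apply Finset.monotone_filter_right
  rintro i - ⟨h1, h2⟩
  exact ⟨h1.trans_le h, h2⟩

lemma final_exp (ε : ℝ) (r : ℕ) (hε0 : 0 < ε) {x : ℝ}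
    (hx : x ≤ (r : ℝ) * (ε / (1 + ε) - Real.log (1 + ε))) :
    Real.exp x ≤ (1 + ε) ^ (-(r : ℝ)) * Real.exp (ε * r / (1 + ε)) := by
  have h1 : (0:ℝ) < 1 + ε := by linarith
  rw [Real.rpow_def_of_pos h1, ← Real.exp_add, Real.exp_le_exp]
  calc x ≤ (r : ℝ) * (ε / (1 + ε) - Real.log (1 + ε)) := hx
    _ = Real.log (1 + ε) * (-(r : ℝ)) + ε * r / (1 + ε) := by ring

/-- Analytic bound, case `r < m`, with `t = r/m`. -/
lemma caseA (p ε : ℝ) (r m : ℕ) (hp0 : 0 < p) (hp1' : p * (1 + ε) < 1)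
    (hε0 : 0 < ε) (hrm : r < m) (hr : 1 ≤ r)
    (hmp : (m : ℝ) * p * (1 + ε) ≤ r) :
    (m : ℝ) * Hfun ((r : ℝ) / m) p ≤ (r : ℝ) * (ε / (1 + ε) - Real.log (1 + ε)) := by
  have hε' : (0:ℝ) < 1 + ε := by linarith
  have hr0 : (0:ℝ) < r := by exact_mod_cast hr
  have hrm' : (r:ℝ) < m := by exact_mod_cast hrm
  have hm0 : (0:ℝ) < m := hr0.trans hrm'
  have hp1 : p < 1 := by nlinarith
  set t : ℝ := (r : ℝ) / m with ht_def
  clear_value t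
  have ht0 : 0 < t := by rw [ht_def]; positivity
  have hpt : p < t := by
    rw [ht_def, lt_div_iff₀ hm0]
    nlinarith [mul_pos (mul_pos hm0 hp0) hε0]
  have ht1 : t < 1 := by rw [ht_def, div_lt_one hm0]; exact hrm'
  have h1t : 0 < 1 - t := by linarith
  set x : ℝ := p * (m : ℝ) / r with hx_def
  clear_value x
  set y : ℝ := 1 / (1 + ε) with hy_def
  clear_value y
  have hx0 : 0 < x := by rw [hx_def]; positivity
  have hy0 : 0 < y := by rw [hy_def]; positivity
  have hy1 : y ≤ 1 := by rw [hy_def, div_le_one hε']; linarith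
  have hxy : x ≤ y := by
    rw [hx_def, hy_def, div_le_div_iff₀ hr0 hε']
    nlinarith
  -- step 1 : expand
  have e1 : (m : ℝ) * Hfun t p
      = (r : ℝ) * Real.log (p / t) + ((m : ℝ) - r) * Real.log ((1 - p) / (1 - t)) := by
    rw [Hfun, ht_def]
    have hm' : (m : ℝ) ≠ 0 := hm0.ne'
    have hr' : (r : ℝ) ≠ 0 := hr0.ne'
    field_simp
  -- step 2 : second log bound
  have e2 : ((m : ℝ) - r) * Real.log ((1 - p) / (1 - t)) ≤ (r : ℝ) - (m : ℝ) * p := by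
    have hq : 0 < (1 - p) / (1 - t) := div_pos (by linarith) h1t
    have hlog := Real.log_le_sub_one_of_pos hq
    have heq : (1 - p) / (1 - t) - 1 = (t - p) / (1 - t) := by field_simp; ring
    have h2 : Real.log ((1 - p) / (1 - t)) ≤ (t - p) / (1 - t) := by
      rw [← heq]; exact hlog
    have h3 : ((m : ℝ) - r) * ((t - p) / (1 - t)) = (r : ℝ) - (m : ℝ) * p := by
      rw [ht_def]
      have hm' : (m : ℝ) ≠ 0 := hm0.ne'
      have hmr' : (m : ℝ) - r ≠ 0 := by linarith
      have h1t' : 1 - (r:ℝ)/m ≠ 0 := by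
        rw [ht_def] at h1t; linarith
      field_simp
    calc ((m : ℝ) - r) * Real.log ((1 - p) / (1 - t))
        ≤ ((m : ℝ) - r) * ((t - p) / (1 - t)) := by
          apply mul_le_mul_of_nonneg_left h2; linarith
      _ = (r : ℝ) - (m : ℝ) * p := h3
  -- step 3 : p / t = x
  have e3 : p / t = x := by
    rw [ht_def, hx_def, div_div_eq_mul_div]
  have e4 : (r : ℝ) - (m : ℝ) * p = (r : ℝ) * (1 - x) := by
    rw [hx_def]; field_simp
  -- step 5 : log x + 1 - x ≤ log y + 1 - y
  have e5 : Real.log x + 1 - x ≤ Real.log y + 1 - y := by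
    have h1 : Real.log (x / y) ≤ x / y - 1 := Real.log_le_sub_one_of_pos (by positivity)
    rw [Real.log_div hx0.ne' hy0.ne'] at h1
    have h2 : x / y - 1 - (x - y) = (1 - y) * (x - y) / y := by field_simp
    have h3 : (1 - y) * (x - y) / y ≤ 0 :=
      div_nonpos_of_nonpos_of_nonneg
        (mul_nonpos_of_nonneg_of_nonpos (by linarith) (by linarith)) hy0.le
    linarith
  -- step 6 : log y = -log(1+ε), 1 - y = ε/(1+ε)
  have e6 : Real.log y = -Real.log (1 + ε) := by
    rw [hy_def, one_div, Real.log_inv]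
  have e7 : 1 - y = ε / (1 + ε) := by
    rw [hy_def]; field_simp; ring
  calc (m : ℝ) * Hfun t p
      = (r : ℝ) * Real.log x + ((m : ℝ) - r) * Real.log ((1 - p) / (1 - t)) := by
        rw [e1, e3]
    _ ≤ (r : ℝ) * Real.log x + ((r : ℝ) - (m : ℝ) * p) := by linarith [e2]
    _ = (r : ℝ) * (Real.log x + 1 - x) := by rw [e4]; ring
    _ ≤ (r : ℝ) * (Real.log y + 1 - y) := by
        apply mul_le_mul_of_nonneg_left e5 hr0.le
    _ = (r : ℝ) * (ε / (1 + ε) - Real.log (1 + ε)) := by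
        rw [e6, show ε / (1 + ε) = 1 - y from e7.symm]; ring

/-- Analytic bound, case `m = r`, with `t = 1 - u²`, `u = ε/(6(1+ε))`. -/
lemma caseB (p ε : ℝ) (hp4 : 1/4 < p) (hp1' : p * (1 + ε) < 1)
    (hε0 : 0 < ε) (hε1 : ε < 1) :
    Hfun (1 - (ε / (6 * (1 + ε))) ^ 2) p ≤ ε / (1 + ε) - Real.log (1 + ε) := by
  have hε' : (0:ℝ) < 1 + ε := by linarith
  have hp0 : (0:ℝ) < p := by linarith
  have hp1 : p < 1 := by nlinarith
  set u : ℝ := ε / (6 * (1 + ε)) with hu_def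
  clear_value u
  have hu0 : 0 < u := by rw [hu_def]; positivity
  have hu6 : 6 * u * (1 + ε) = ε := by rw [hu_def]; field_simp
  have hu16 : u < 1/6 := by nlinarith
  set t : ℝ := 1 - u ^ 2 with ht_def
  clear_value t
  have hu2 : u ^ 2 < u := by nlinarith
  have ht0 : 0 < t := by rw [ht_def]; nlinarith
  have ht1 : t < 1 := by rw [ht_def]; nlinarith
  have h1t : 1 - t = u ^ 2 := by rw [ht_def]; ring
  have h1p : 0 < 1 - p := by linarith
  -- expansion
  have expand : Hfun t p = t * Real.log p - t * Real.log t
      + (1 - t) * Real.log (1 - p) - (1 - t) * Real.log (1 - t) := by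
    rw [Hfun, Real.log_div hp0.ne' ht0.ne', Real.log_div h1p.ne' (by linarith : (1:ℝ) - t ≠ 0)]
    field_simp
    ring
  -- -(t log t) ≤ 1 - t
  have hlt : -(t * Real.log t) ≤ 1 - t := by
    have h := Real.log_le_sub_one_of_pos (inv_pos.mpr ht0)
    rw [Real.log_inv] at h
    have h2 := mul_le_mul_of_nonneg_left h ht0.le
    have h3 : t * (t⁻¹ - 1) = 1 - t := by field_simp
    nlinarith [h2, h3]
  -- -( (1-t) log (1-t) ) ≤ 2u
  have hlu : -((1 - t) * Real.log (1 - t)) ≤ 2 * u := by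
    rw [h1t, Real.log_pow]
    have h := Real.log_le_sub_one_of_pos (inv_pos.mpr hu0)
    rw [Real.log_inv] at h
    have h3 : u * (-Real.log u) ≤ 1 := by
      have h2 := mul_le_mul_of_nonneg_left h hu0.le
      have h4 : u * (u⁻¹ - 1) = 1 - u := by field_simp
      nlinarith
    push_cast
    have h4 : 2 * u * (u * (-Real.log u)) ≤ 2 * u * 1 :=
      mul_le_mul_of_nonneg_left h3 (by positivity)
    nlinarith [h4]
  -- -(u² log p) ≤ 3 u²
  have hlp : -(u ^ 2 * Real.log p) ≤ 3 * u ^ 2 := by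
    have h := Real.log_le_sub_one_of_pos (inv_pos.mpr hp0)
    rw [Real.log_inv] at h
    have hpinv : p⁻¹ < 4 := by
      rw [inv_eq_one_div, div_lt_iff₀ hp0]; linarith
    have h2 : -Real.log p ≤ 3 := by linarith
    nlinarith [sq_nonneg u]
  -- (1-t) log(1-p) ≤ 0
  have hl1p : (1 - t) * Real.log (1 - p) ≤ 0 :=
    mul_nonpos_of_nonneg_of_nonpos (by nlinarith) (Real.log_nonpos h1p.le (by linarith))
  -- log p ≤ -log(1+ε)
  have hlpe : Real.log p ≤ -Real.log (1 + ε) := by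
    have hple : p ≤ (1 + ε)⁻¹ := by
      rw [inv_eq_one_div, le_div_iff₀ hε']; linarith
    rw [← Real.log_inv]
    exact Real.log_le_log hp0 hple
  -- assemble
  have hu1 : u ≤ 1 := by linarith
  have key : Hfun t p ≤ Real.log p + 6 * u := by
    rw [expand]
    have ht_lp : t * Real.log p = Real.log p - u ^ 2 * Real.log p := by
      rw [ht_def]; ring
    linarith [hlt, hlu, hlp, hl1p, ht_lp, h1t, hu2]
  have h6u : 6 * u = ε / (1 + ε) := by
    rw [hu_def]; field_simp
  linarith [key, hlpe, h6u.le, h6u.ge]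

theorem stmt_16 (N M r : ℕ) (hr : 1 ≤ r) (hrM : r ≤ M) (hMN : M < N)
    (ε p : ℝ) (hp : p = (M : ℝ) / N) (hε0 : 0 < ε) (hε1 : ε < 1)
    (hp1 : p * (1 + ε) < 1)
    -- Hoeffding's inequality for sampling without replacement (assumed):
    (hHoeff : ∀ m : ℕ, 1 ≤ m → m ≤ N → ∀ t : ℝ, p < t → t < 1 →
      Pr N (fun σ => t ≤ (drawCount N M σ m : ℝ) / m) ≤ Real.exp (m * Hfun t p)) :
    Pr N (fun σ => (1 + ε) * p ≤ (r : ℝ) / (stopTime N M r σ)) ≤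
      (1 + ε) ^ (-(r : ℝ)) * Real.exp (ε * r / (1 + ε)) := by
  have hN0 : 0 < N := lt_of_le_of_lt (Nat.zero_le M) hMN
  have hM0 : 0 < M := lt_of_lt_of_le hr hrM
  have hε' : (0:ℝ) < 1 + ε := by linarith
  have hNR : (0:ℝ) < N := by exact_mod_cast hN0
  have hMR : (0:ℝ) < M := by exact_mod_cast hM0
  have hp0 : 0 < p := by rw [hp]; positivity
  have hpl1 : p < 1 := by
    rw [hp, div_lt_one hNR]; exact_mod_cast hMN
  have hr1 : (1:ℝ) ≤ (r:ℝ) := by exact_mod_cast hr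
  have hr0 : (0:ℝ) < (r:ℝ) := by linarith
  set c : ℝ := (1 + ε) * p with hc_def
  clear_value c
  have hc0 : 0 < c := by rw [hc_def]; positivity
  have hc1 : c < 1 := by rw [hc_def, mul_comm]; exact hp1
  set m : ℕ := ⌊(r : ℝ) / c⌋₊ with hm_def
  clear_value m
  have hrm : r ≤ m := by
    rw [hm_def]
    apply Nat.le_floor
    rw [le_div_iff₀ hc0]
    nlinarith
  have hmle : (m : ℝ) ≤ (r : ℝ) / c := by
    rw [hm_def]; exact Nat.floor_le (by positivity)
  have hmc : (m : ℝ) * c ≤ r := by rwa [← le_div_iff₀ hc0]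
  have hmpr : (m : ℝ) * p * (1 + ε) ≤ r := by
    calc (m : ℝ) * p * (1 + ε) = (m : ℝ) * c := by rw [hc_def]; ring
      _ ≤ r := hmc
  have hm0 : 0 < m := lt_of_lt_of_le hr hrm
  have hm0' : (0:ℝ) < m := by exact_mod_cast hm0
  -- m < N
  have hmN : m < N := by
    have h1 : (r : ℝ) / c < (r : ℝ) / p := by
      apply div_lt_div_of_pos_left hr0 hp0
      rw [hc_def]; nlinarith
    have h2 : (r : ℝ) / p ≤ N := by
      rw [hp, div_div_eq_mul_div, div_le_iff₀ hMR]
      have hrM' : (r : ℝ) ≤ M := by exact_mod_cast hrM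
      nlinarith
    have : (m : ℝ) < N := lt_of_le_of_lt hmle (lt_of_lt_of_le h1 h2)
    exact_mod_cast this
  -- event implication
  have hstop : ∀ σ : Equiv.Perm (Fin N),
      c ≤ (r : ℝ) / (stopTime N M r σ) → r ≤ drawCount N M σ m := by
    intro σ hσ
    set n := stopTime N M r σ with hn_def
    have hne : {k | drawCount N M σ k = r ∨ k = N}.Nonempty := ⟨N, Or.inr rfl⟩
    have hmem : drawCount N M σ n = r ∨ n = N := Nat.sInf_mem hne
    have hn0 : n ≠ 0 := by
      intro h0
      rw [h0] at hσ
      norm_num at hσ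
      linarith
    have hnpos : (0:ℝ) < n := by
      have : 0 < n := Nat.pos_of_ne_zero hn0
      exact_mod_cast this
    have hnm : n ≤ m := by
      rw [hm_def]
      apply Nat.le_floor
      rw [le_div_iff₀ hc0]
      have h1 : c * n ≤ r := by
        calc c * n ≤ ((r : ℝ) / n) * n := mul_le_mul_of_nonneg_right hσ hnpos.le
          _ = r := by field_simp
      calc (n : ℝ) * c = c * n := by ring
        _ ≤ r := h1
    have hdn : drawCount N M σ n = r := by
      rcases hmem with h | h
      · exact h
      · omega
    calc r = drawCount N M σ n := hdn.symm
      _ ≤ drawCount N M σ m := drawCount_mono N M σ hnm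
  rcases eq_or_lt_of_le hrm with hEq | hLt
  · -- case m = r : t = 1 - u²
    -- first : p > 1/4
    have hfl : (r : ℝ) / c < (r : ℝ) + 1 := by
      have h := Nat.lt_floor_add_one ((r : ℝ) / c)
      rw [← hm_def, ← hEq] at h
      exact_mod_cast h
    have hc12 : 1/2 < c := by
      rw [div_lt_iff₀ hc0] at hfl
      nlinarith
    have hp4 : 1/4 < p := by
      rw [hc_def] at hc12
      nlinarith
    set t : ℝ := 1 - (ε / (6 * (1 + ε))) ^ 2 with ht_def
    clear_value t
    have hu0 : 0 < ε / (6 * (1 + ε)) := by positivity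
    have hu16 : ε / (6 * (1 + ε)) < 1/6 := by
      clear hstop hHoeff
      rw [div_lt_iff₀ (by positivity)]
      nlinarith
    have ht1 : t < 1 := by
      clear hstop hHoeff
      rw [ht_def]
      nlinarith [sq_nonneg (ε / (6 * (1 + ε)))]
    have hpt : p < t := by
      clear hstop hHoeff
      rw [ht_def]
      have h1 : p * (1 + ε) < 1 := hp1
      have hu2 : (ε / (6 * (1 + ε))) ^ 2 < ε / (6 * (1 + ε)) := by nlinarith
      have h6 : 6 * (ε / (6 * (1 + ε))) = ε / (1 + ε) := by field_simp
      have h2 : p < 1 - ε / (1 + ε) := by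
        have : 1 - ε / (1 + ε) = 1 / (1 + ε) := by field_simp; ring
        rw [this, lt_div_iff₀ hε']
        linarith
      nlinarith
    calc Pr N (fun σ => c ≤ (r : ℝ) / (stopTime N M r σ))
        ≤ Pr N (fun σ => t ≤ (drawCount N M σ m : ℝ) / m) := by
          apply Pr_mono
          intro σ hσ
          have hK : r ≤ drawCount N M σ m := hstop σ hσ
          have h1 : (1:ℝ) ≤ (drawCount N M σ m : ℝ) / m := by
            rw [le_div_iff₀ hm0']
            have hmK : m ≤ drawCount N M σ m := hEq ▸ hK
            have : (m : ℝ) ≤ drawCount N M σ m := by exact_mod_cast hmK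
            linarith
          linarith
      _ ≤ Real.exp (m * Hfun t p) := hHoeff m hm0 hmN.le t hpt ht1
      _ ≤ (1 + ε) ^ (-(r : ℝ)) * Real.exp (ε * r / (1 + ε)) := by
          apply final_exp ε r hε0
          have hB := caseB p ε hp4 hp1 hε0 hε1
          rw [← ht_def] at hB
          have hmr : (m : ℝ) = r := by exact_mod_cast hEq.symm
          rw [hmr]
          apply mul_le_mul_of_nonneg_left hB hr0.le
  · -- case r < m : t = r / m
    set t : ℝ := (r : ℝ) / m with ht_def
    clear_value t
    have hrm' : (r : ℝ) < m := by exact_mod_cast hLt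
    have ht1 : t < 1 := by clear hstop hHoeff; rw [ht_def, div_lt_one hm0']; exact hrm'
    have hpt : p < t := by
      clear hstop hHoeff
      rw [ht_def, lt_div_iff₀ hm0']
      nlinarith [mul_pos (mul_pos hm0' hp0) hε0]
    calc Pr N (fun σ => c ≤ (r : ℝ) / (stopTime N M r σ))
        ≤ Pr N (fun σ => t ≤ (drawCount N M σ m : ℝ) / m) := by
          apply Pr_mono
          intro σ hσ
          have hK : r ≤ drawCount N M σ m := hstop σ hσ
          rw [ht_def]
          have hK' : (r : ℝ) ≤ drawCount N M σ m := by exact_mod_cast hK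
          exact (div_le_div_iff_of_pos_right hm0').mpr hK'
      _ ≤ Real.exp (m * Hfun t p) := hHoeff m hm0 hmN.le t hpt ht1
      _ ≤ (1 + ε) ^ (-(r : ℝ)) * Real.exp (ε * r / (1 + ε)) := by
          apply final_exp ε r hε0
          rw [ht_def]
          exact caseA p ε r m hp0 hp1 hε0 hLt hr hmpr
end
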